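/- arXiv:1709.01542 — 2 statements merged into one kernel-verified Lean document; each statement's English description precedes it below -/
import Mathlib

section
/- Let H₁ be a connected simple graph containing a vertex v with d(v) ≥ 3, a pendant vertex v₁ whose unique neighbor is v, and an edge u₁u₂ lying on a cycle of H₁ with u₁, u₂ ∉ {v, v₁}. Let H₂ = H₁ − {u₁u₂, vv₁} + {u₁v₁, u₂v₁} (delete the edges u₁u₂ and vv₁ and add the edges u₁v₁ and u₂v₁). Then M₁(H₂) < M₁(H₁). -/
open scoped Classical in
/-- The first Zagreb index: the sum of the squares of the vertex degrees. -/
noncomputable def zagrebM1 {V : Type*} [Fintype V] (G : SimpleGraph V) : ℕ :=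
  ∑ v : V, G.degree v ^ 2

open scoped Classical in
private lemma opI_adj {V : Type*} (H₁ : SimpleGraph V) (v v₁ u₁ u₂ : V)
    (hu₁v₁ : u₁ ≠ v₁) (hu₂v₁ : u₂ ≠ v₁)
    (H₂ : SimpleGraph V)
    (hH₂ : H₂ = SimpleGraph.fromEdgeSet
      ((H₁.edgeSet \ {s(u₁, u₂), s(v, v₁)}) ∪ {s(u₁, v₁), s(u₂, v₁)})) :
    ∀ a b, H₂.Adj a b ↔
      ((H₁.Adj a b ∧ ¬(a = u₁ ∧ b = u₂) ∧ ¬(a = u₂ ∧ b = u₁) ∧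
        ¬(a = v ∧ b = v₁) ∧ ¬(a = v₁ ∧ b = v)) ∨
       (a = u₁ ∧ b = v₁) ∨ (a = v₁ ∧ b = u₁) ∨ (a = u₂ ∧ b = v₁) ∨ (a = v₁ ∧ b = u₂)) := by
  intro a b
  subst hH₂
  rw [SimpleGraph.fromEdgeSet_adj]
  simp only [Set.mem_union, Set.mem_diff, Set.mem_insert_iff, Set.mem_singleton_iff,
    SimpleGraph.mem_edgeSet, Sym2.eq_iff]
  constructor
  · rintro ⟨⟨h1, h3⟩ | h | h, -⟩
    · exact Or.inl ⟨h1, by tauto⟩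
    · tauto
    · tauto
  · rintro (⟨h1, hA, hB, hC, hD⟩ | ⟨rfl, rfl⟩ | ⟨rfl, rfl⟩ | ⟨rfl, rfl⟩ | ⟨rfl, rfl⟩)
    · exact ⟨Or.inl ⟨h1, by tauto⟩, h1.ne⟩
    · exact ⟨Or.inr (Or.inl (Or.inl ⟨rfl, rfl⟩)), hu₁v₁⟩
    · exact ⟨Or.inr (Or.inl (Or.inr ⟨rfl, rfl⟩)), Ne.symm hu₁v₁⟩
    · exact ⟨Or.inr (Or.inr (Or.inl ⟨rfl, rfl⟩)), hu₂v₁⟩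
    · exact ⟨Or.inr (Or.inr (Or.inr ⟨rfl, rfl⟩)), Ne.symm hu₂v₁⟩

set_option maxHeartbeats 2000000 in
open scoped Classical in
/-- Operation I: if `H₁` is connected, `v` has degree at least 3, `v₁` is a pendant
vertex whose unique neighbor is `v`, and `u₁u₂` is an edge lying on a cycle of `H₁`
with `u₁, u₂ ∉ {v, v₁}`, then the graph
`H₂ = H₁ - {u₁u₂, vv₁} + {u₁v₁, u₂v₁}` satisfies `M₁(H₂) < M₁(H₁)`. -/
theorem M1_operationI_lt {V : Type*} [Fintype V] (H₁ : SimpleGraph V)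
    (hconn : H₁.Connected) (v v₁ u₁ u₂ : V)
    (hdeg : 3 ≤ H₁.degree v)
    (hpend : H₁.degree v₁ = 1) (hadj : H₁.Adj v v₁)
    (hcyc : ∃ (x : V) (c : H₁.Walk x x), c.IsCycle ∧ s(u₁, u₂) ∈ c.edges)
    (hu₁v : u₁ ≠ v) (hu₁v₁ : u₁ ≠ v₁) (hu₂v : u₂ ≠ v) (hu₂v₁ : u₂ ≠ v₁)
    (H₂ : SimpleGraph V)
    (hH₂ : H₂ = SimpleGraph.fromEdgeSet
      ((H₁.edgeSet \ {s(u₁, u₂), s(v, v₁)}) ∪ {s(u₁, v₁), s(u₂, v₁)})) :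
    zagrebM1 H₂ < zagrebM1 H₁ := by
  classical
  obtain ⟨x, c, hc, he⟩ := hcyc
  have hu12 : H₁.Adj u₁ u₂ := c.adj_of_mem_edges he
  have hvv₁ : v ≠ v₁ := H₁.ne_of_adj hadj
  have hu₁u₂ : u₁ ≠ u₂ := H₁.ne_of_adj hu12
  have hN : H₁.neighborFinset v₁ = {v} := by
    symm
    apply Finset.eq_of_subset_of_card_le
    · intro y hy
      simp only [Finset.mem_singleton] at hy
      subst hy
      simpa using hadj.symm
    · rw [Finset.card_singleton]; exact hpend.le
  have hadjv₁ : ∀ y, H₁.Adj v₁ y ↔ y = v := by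
    intro y
    rw [← SimpleGraph.mem_neighborFinset, hN, Finset.mem_singleton]
  have hnadj₁ : ¬ H₁.Adj u₁ v₁ := fun h => hu₁v ((hadjv₁ u₁).mp h.symm)
  have hnadj₂ : ¬ H₁.Adj u₂ v₁ := fun h => hu₂v ((hadjv₁ u₂).mp h.symm)
  -- fully expanded adjacency in H₂
  have h2 := opI_adj H₁ v v₁ u₁ u₂ hu₁v₁ hu₂v₁ H₂ hH₂
  have hsym : (v₁ ≠ v) ∧ (v₁ ≠ u₁) ∧ (v₁ ≠ u₂) ∧ (v ≠ u₁) ∧ (v ≠ u₂) ∧ (u₂ ≠ u₁) :=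
    ⟨hvv₁.symm, hu₁v₁.symm, hu₂v₁.symm, hu₁v.symm, hu₂v.symm, hu₁u₂.symm⟩
  obtain ⟨s1, s2, s3, s4, s5, s6⟩ := hsym
  have rv : v = v := rfl
  have rv₁ : v₁ = v₁ := rfl
  have ru₁ : u₁ = u₁ := rfl
  have ru₂ : u₂ = u₂ := rfl
  clear hc he hconn hN hH₂
  have hdv₁ : H₂.neighborFinset v₁ = {u₁, u₂} := by
    ext y
    rw [SimpleGraph.mem_neighborFinset, h2]
    simp only [Finset.mem_insert, Finset.mem_singleton]
    have h3 := hadjv₁ y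
    tauto
  have hdegv₁ : H₂.degree v₁ = 2 := by
    rw [SimpleGraph.degree, hdv₁]
    rw [Finset.card_insert_of_notMem (by simpa using hu₁u₂), Finset.card_singleton]
  have hdv : H₂.neighborFinset v = (H₁.neighborFinset v).erase v₁ := by
    ext y
    rw [SimpleGraph.mem_neighborFinset, h2]
    simp only [Finset.mem_erase, SimpleGraph.mem_neighborFinset]
    tauto
  have hdegv : H₂.degree v = H₁.degree v - 1 := by
    rw [SimpleGraph.degree, hdv, Finset.card_erase_of_mem (by simpa using hadj)]
    rfl
  have hdegu₁ : H₂.degree u₁ = H₁.degree u₁ := by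
    have hset : H₂.neighborFinset u₁ = insert v₁ ((H₁.neighborFinset u₁).erase u₂) := by
      ext y
      rw [SimpleGraph.mem_neighborFinset, h2]
      simp only [Finset.mem_insert, Finset.mem_erase, SimpleGraph.mem_neighborFinset]
      tauto
    have hmem : u₂ ∈ H₁.neighborFinset u₁ := by simpa using hu12
    have hpos : 1 ≤ (H₁.neighborFinset u₁).card := Finset.card_pos.mpr ⟨u₂, hmem⟩
    rw [SimpleGraph.degree, SimpleGraph.degree, hset,
      Finset.card_insert_of_notMem (by
        simp only [Finset.mem_erase, SimpleGraph.mem_neighborFinset]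
        rintro ⟨-, h⟩; exact hnadj₁ h),
      Finset.card_erase_of_mem hmem]
    omega
  have hdegu₂ : H₂.degree u₂ = H₁.degree u₂ := by
    have hset : H₂.neighborFinset u₂ = insert v₁ ((H₁.neighborFinset u₂).erase u₁) := by
      ext y
      rw [SimpleGraph.mem_neighborFinset, h2]
      simp only [Finset.mem_insert, Finset.mem_erase, SimpleGraph.mem_neighborFinset]
      tauto
    have hmem : u₁ ∈ H₁.neighborFinset u₂ := by simpa using hu12.symm
    have hpos : 1 ≤ (H₁.neighborFinset u₂).card := Finset.card_pos.mpr ⟨u₁, hmem⟩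
    rw [SimpleGraph.degree, SimpleGraph.degree, hset,
      Finset.card_insert_of_notMem (by
        simp only [Finset.mem_erase, SimpleGraph.mem_neighborFinset]
        rintro ⟨-, h⟩; exact hnadj₂ h),
      Finset.card_erase_of_mem hmem]
    omega
  have hdeggen : ∀ w, w ≠ v → w ≠ v₁ → H₂.degree w = H₁.degree w := by
    intro w hwv hwv₁
    by_cases hw1 : w = u₁
    · subst hw1; exact hdegu₁
    by_cases hw2 : w = u₂
    · subst hw2; exact hdegu₂
    have hset : H₂.neighborFinset w = H₁.neighborFinset w := by
      ext y
      rw [SimpleGraph.mem_neighborFinset, h2]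
      simp only [SimpleGraph.mem_neighborFinset]
      tauto
    rw [SimpleGraph.degree, SimpleGraph.degree, hset]
  have hsplit : ∀ G : SimpleGraph V,
      zagrebM1 G = G.degree v ^ 2 + G.degree v₁ ^ 2 + ∑ w ∈ Finset.univ \ {v, v₁}, G.degree w ^ 2 := by
    intro G
    have hsub : ({v, v₁} : Finset V) ⊆ Finset.univ := Finset.subset_univ _
    rw [zagrebM1, ← Finset.sum_sdiff hsub, Finset.sum_pair hvv₁]
    ring
  have htail : ∑ w ∈ Finset.univ \ {v, v₁}, H₂.degree w ^ 2
      = ∑ w ∈ Finset.univ \ {v, v₁}, H₁.degree w ^ 2 := by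
    apply Finset.sum_congr rfl
    intro w hw
    simp only [Finset.mem_sdiff, Finset.mem_insert, Finset.mem_singleton] at hw
    rw [hdeggen w (fun h => hw.2 (Or.inl h)) (fun h => hw.2 (Or.inr h))]
  rw [hsplit H₁, hsplit H₂, htail, hdegv, hdegv₁, hpend]
  obtain ⟨e, hE⟩ : ∃ e, H₁.degree v = e + 3 := ⟨H₁.degree v - 3, by omega⟩
  rw [hE]
  have h1 : e + 3 - 1 = e + 2 := by omega
  rw [h1]
  have h3 : (e + 2) ^ 2 + 2 ^ 2 < (e + 3) ^ 2 + 1 ^ 2 := by nlinarith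
  omega
end

section
/- Let H₁ be a connected simple graph containing a vertex v with d(v) ≥ 3, a pendant vertex v₁ whose unique neighbor is v, and an edge u₁u₂ lying on a cycle of H₁ with u₁, u₂ ∉ {v, v₁}. Let H₂ = H₁ − {u₁u₂, vv₁} + {u₁v₁, u₂v₁} (delete the edges u₁u₂ and vv₁ and add the edges u₁v₁ and u₂v₁). Then M₂(H₂) < M₂(H₁). -/
/-!
Compare the two graphs edge by edge. The edges of `H₁` other than `u₁u₂` and `vv₁` survive in
`H₂`, and among their endpoints only `v` changes degree, losing one; `v₁` rises from degree 1
to 2 but lies on none of them. Each of the `d(v) - 1` surviving edges at `v` therefore loses at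
least one unit, and
`M₂(H₁) - M₂(H₂) ≥ d(u₁)d(u₂) + d(v) - 2d(u₁) - 2d(u₂) + (d(v) - 1)
  = (d(u₁) - 2)(d(u₂) - 2) + 2d(v) - 5`,
which is positive since `u₁, u₂` lie on a cycle, hence have degree at least 2, and `d(v) ≥ 3`.
-/

open scoped Classical in
/-- The second Zagreb index: the sum over all edges of the product of the
degrees of the two endpoints. -/
noncomputable def zagrebM2 {V : Type*} [Fintype V] (G : SimpleGraph V) : ℕ :=
  ∑ e ∈ G.edgeFinset,
    Sym2.lift ⟨fun x y => G.degree x * G.degree y, fun _ _ => Nat.mul_comm _ _⟩ e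

open Finset

namespace Sym2

variable {α : Type*}

def liftMul (f : α → ℕ) : Sym2 α → ℕ :=
  Sym2.lift ⟨fun x y => f x * f y, fun _ _ => Nat.mul_comm _ _⟩

@[simp]
theorem liftMul_mk (f : α → ℕ) (x y : α) : liftMul f s(x, y) = f x * f y := rfl

theorem liftMul_le_liftMul {f g : α → ℕ} {e : Sym2 α} (h : ∀ x ∈ e, f x ≤ g x) :
    liftMul f e ≤ liftMul g e := by
  induction e using Sym2.ind with
  | _ x y => simpa using Nat.mul_le_mul (h x (mem_mk_left x y)) (h y (mem_mk_right x y))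

theorem liftMul_lt_liftMul {f g : α → ℕ} {e : Sym2 α} {v : α} (h : ∀ x ∈ e, f x ≤ g x)
    (hpos : ∀ x ∈ e, 0 < g x) (hv : v ∈ e) (hlt : f v < g v) : liftMul f e < liftMul g e := by
  induction e using Sym2.ind with
  | _ x y =>
    rw [liftMul_mk, liftMul_mk]
    rcases Sym2.mem_iff.1 hv with rfl | rfl
    · exact Nat.mul_lt_mul_of_lt_of_le hlt (h y (mem_mk_right _ y)) (hpos y (mem_mk_right _ y))
    · exact Nat.mul_lt_mul_of_le_of_lt (h x (mem_mk_left x _)) hlt (hpos x (mem_mk_left x _))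

theorem sum_liftMul_add_card_filter_mem_le [DecidableEq α] {E : Finset (Sym2 α)} {f g : α → ℕ}
    {v : α} (h : ∀ e ∈ E, ∀ x ∈ e, f x ≤ g x) (hpos : ∀ e ∈ E, ∀ x ∈ e, 0 < g x)
    (hlt : f v < g v) :
    ∑ e ∈ E, liftMul f e + #{e ∈ E | v ∈ e} ≤ ∑ e ∈ E, liftMul g e := by
  rw [card_filter, ← sum_add_distrib]
  refine sum_le_sum fun e he => ?_
  split_ifs with hv
  · exact liftMul_lt_liftMul (h e he) (hpos e he) hv hlt
  · simpa using liftMul_le_liftMul (h e he)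

theorem card_filter_mem_pair [DecidableEq α] {a b c d : α} (h : s(a, b) ≠ s(c, d)) (x : α) :
    #{e ∈ ({s(a, b), s(c, d)} : Finset (Sym2 α)) | x ∈ e} =
      (if x = a ∨ x = b then 1 else 0) + (if x = c ∨ x = d then 1 else 0) := by
  rw [card_filter, sum_pair h]
  simp only [Sym2.mem_iff]

end Sym2

namespace SimpleGraph

variable {V : Type*} {G : SimpleGraph V}

theorem Walk.IsCycle.two_le_degree {u v : V} [Fintype (G.neighborSet v)] {p : G.Walk u u}
    (hp : p.IsCycle) (hv : v ∈ p.support) : 2 ≤ G.degree v := by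
  rw [← hp.ncard_neighborSet_toSubgraph_eq_two hv, ← card_neighborSet_eq_degree,
    ← Nat.card_eq_fintype_card, Nat.card_coe_set_eq]
  exact Set.ncard_le_ncard (p.toSubgraph.neighborSet_subset v)

theorem eq_of_mem_edgeFinset_of_degree_eq_one [DecidableEq V] [Fintype G.edgeSet] {v v₁ : V}
    [Fintype (G.neighborSet v₁)] (hpend : G.degree v₁ = 1) (hadj : G.Adj v v₁) {e : Sym2 V}
    (he : e ∈ G.edgeFinset) (hv₁ : v₁ ∈ e) : e = s(v, v₁) := by
  have hcard : #(G.incidenceFinset v₁) ≤ 1 := by rw [card_incidenceFinset_eq_degree, hpend]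
  refine card_le_one.1 hcard e ?_ s(v, v₁) ?_ <;>
    simp [incidenceFinset_eq_filter, he, hv₁, hadj]

theorem degree_eq_card_filter_mem_add [DecidableEq V] [Fintype G.edgeSet]
    {S T : Finset (Sym2 V)} (hG : G.edgeFinset = S ∪ T) (hST : Disjoint S T) (x : V)
    [Fintype (G.neighborSet x)] : G.degree x = #{e ∈ S | x ∈ e} + #{e ∈ T | x ∈ e} := by
  rw [← card_incidenceFinset_eq_degree, incidenceFinset_eq_filter, hG, filter_union,
    card_union_of_disjoint (disjoint_filter_filter hST)]

theorem edgeSet_fromEdgeSet_sdiff_union {R A : Set (Sym2 V)} (hA : ∀ e ∈ A, ¬e.IsDiag) :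
    (fromEdgeSet ((G.edgeSet \ R) ∪ A)).edgeSet = (G.edgeSet \ R) ∪ A := by
  rw [edgeSet_fromEdgeSet, sdiff_eq_left, Set.disjoint_left]
  rintro e (he | he)
  exacts [G.not_isDiag_of_mem_edgeSet he.1, hA e he]

section OperationI

open scoped Classical

variable [Fintype V] {v v₁ u₁ u₂ : V}

theorem zagrebM2_eq_sum_add_sum {S T : Finset (Sym2 V)} (hG : G.edgeFinset = S ∪ T)
    (hST : Disjoint S T) :
    zagrebM2 G = ∑ e ∈ S, Sym2.liftMul (G.degree ·) e + ∑ e ∈ T, Sym2.liftMul (G.degree ·) e := by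
  rw [zagrebM2, hG, sum_union hST]
  rfl

theorem sum_liftMul_degree_add_card_filter_mem_le {G' : SimpleGraph V} {E : Finset (Sym2 V)}
    (hE : E ⊆ G.edgeFinset) (hle : ∀ e ∈ E, ∀ x ∈ e, G'.degree x ≤ G.degree x)
    (hlt : G'.degree v < G.degree v) :
    ∑ e ∈ E, Sym2.liftMul (G'.degree ·) e + #{e ∈ E | v ∈ e} ≤
      ∑ e ∈ E, Sym2.liftMul (G.degree ·) e := by
  refine Sym2.sum_liftMul_add_card_filter_mem_le hle (fun e he x hx => ?_) hlt
  rw [← card_incidenceFinset_eq_degree, card_pos]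
  exact ⟨e, by simp [incidenceFinset_eq_filter, hE he, hx]⟩

def operationI (G : SimpleGraph V) (v v₁ u₁ u₂ : V) : SimpleGraph V :=
  fromEdgeSet ((G.edgeSet \ {s(u₁, u₂), s(v, v₁)}) ∪ {s(u₁, v₁), s(u₂, v₁)})

theorem edgeFinset_operationI (hu₁v₁ : u₁ ≠ v₁) (hu₂v₁ : u₂ ≠ v₁) :
    (G.operationI v v₁ u₁ u₂).edgeFinset =
      (G.edgeFinset \ {s(u₁, u₂), s(v, v₁)}) ∪ {s(u₁, v₁), s(u₂, v₁)} := by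
  apply coe_injective
  rw [coe_edgeFinset, operationI, edgeSet_fromEdgeSet_sdiff_union (by simp [hu₁v₁, hu₂v₁])]
  simp

theorem notMem_of_mem_edgeFinset_sdiff (hpend : G.degree v₁ = 1) (hadj : G.Adj v v₁)
    {e : Sym2 V} (he : e ∈ G.edgeFinset \ {s(u₁, u₂), s(v, v₁)}) : v₁ ∉ e := fun hv₁ =>
  (mem_sdiff.1 he).2 (by simp [eq_of_mem_edgeFinset_of_degree_eq_one hpend hadj
    (mem_sdiff.1 he).1 hv₁])

theorem disjoint_edgeFinset_sdiff_operationI (hpend : G.degree v₁ = 1) (hadj : G.Adj v v₁) :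
    Disjoint (G.edgeFinset \ {s(u₁, u₂), s(v, v₁)}) {s(u₁, v₁), s(u₂, v₁)} := by
  refine disjoint_right.2 fun e he he₀ => notMem_of_mem_edgeFinset_sdiff hpend hadj he₀ ?_
  simp only [mem_insert, mem_singleton] at he
  rcases he with rfl | rfl <;> simp

theorem edgeFinset_eq_sdiff_union (hu : G.Adj u₁ u₂) (hadj : G.Adj v v₁) :
    G.edgeFinset = (G.edgeFinset \ {s(u₁, u₂), s(v, v₁)}) ∪ {s(u₁, u₂), s(v, v₁)} :=
  (sdiff_union_of_subset (by simp [insert_subset_iff, hu, hadj])).symm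

theorem card_filter_mem_edgeFinset_sdiff_add_one (hu : G.Adj u₁ u₂) (hadj : G.Adj v v₁)
    (hu₁v : u₁ ≠ v) (hu₂v : u₂ ≠ v) :
    #{e ∈ G.edgeFinset \ {s(u₁, u₂), s(v, v₁)} | v ∈ e} + 1 = G.degree v := by
  rw [degree_eq_card_filter_mem_add (edgeFinset_eq_sdiff_union hu hadj) sdiff_disjoint,
    Sym2.card_filter_mem_pair (by simp [hu₁v, hu₂v])]
  simp [hu₁v.symm, hu₂v.symm]

theorem degree_operationI (hpend : G.degree v₁ = 1) (hadj : G.Adj v v₁) (hu : G.Adj u₁ u₂)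
    (hu₁v : u₁ ≠ v) (hu₁v₁ : u₁ ≠ v₁) (hu₂v : u₂ ≠ v) (hu₂v₁ : u₂ ≠ v₁) (x : V) :
    (G.operationI v v₁ u₁ u₂).degree x =
      if x = v₁ then 2 else if x = v then G.degree v - 1 else G.degree x := by
  have h₂ := degree_eq_card_filter_mem_add (edgeFinset_operationI hu₁v₁ hu₂v₁)
    (disjoint_edgeFinset_sdiff_operationI hpend hadj) x
  have h₁ := degree_eq_card_filter_mem_add (edgeFinset_eq_sdiff_union hu hadj) sdiff_disjoint x
  simp only [Sym2.card_filter_mem_pair (show s(u₁, u₂) ≠ s(v, v₁) by simp [hu₁v, hu₂v]),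
    Sym2.card_filter_mem_pair (show s(u₁, v₁) ≠ s(u₂, v₁) by simp [hu.ne, hu₁v₁])] at h₁ h₂
  have hvv₁ := hadj.ne
  have hu₁u₂ := hu.ne
  split_ifs at h₁ h₂ ⊢ <;> grind

end OperationI

end SimpleGraph

open SimpleGraph

open scoped Classical in
theorem M2_operationI_lt_general {V : Type*} [Fintype V] (H₁ : SimpleGraph V)
    (v v₁ u₁ u₂ : V)
    (hdeg : 3 ≤ H₁.degree v)
    (hpend : H₁.degree v₁ = 1) (hadj : H₁.Adj v v₁)
    (hcyc : ∃ (x : V) (c : H₁.Walk x x), c.IsCycle ∧ s(u₁, u₂) ∈ c.edges)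
    (hu₁v : u₁ ≠ v) (hu₁v₁ : u₁ ≠ v₁) (hu₂v : u₂ ≠ v) (hu₂v₁ : u₂ ≠ v₁)
    (H₂ : SimpleGraph V)
    (hH₂ : H₂ = SimpleGraph.fromEdgeSet
      ((H₁.edgeSet \ {s(u₁, u₂), s(v, v₁)}) ∪ {s(u₁, v₁), s(u₂, v₁)})) :
    zagrebM2 H₂ < zagrebM2 H₁ := by
  obtain ⟨x, c, hc, hcu⟩ := hcyc
  have hu : H₁.Adj u₁ u₂ := c.adj_of_mem_edges hcu
  have hdu₁ : 2 ≤ H₁.degree u₁ := hc.two_le_degree (c.fst_mem_support_of_mem_edges hcu)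
  have hdu₂ : 2 ≤ H₁.degree u₂ := hc.two_le_degree (c.snd_mem_support_of_mem_edges hcu)
  replace hH₂ : H₂ = H₁.operationI v v₁ u₁ u₂ := hH₂
  have hdeg₂ : ∀ y, H₂.degree y =
      if y = v₁ then 2 else if y = v then H₁.degree v - 1 else H₁.degree y :=
    hH₂ ▸ degree_operationI hpend hadj hu hu₁v hu₁v₁ hu₂v hu₂v₁
  have hle : ∀ e ∈ H₁.edgeFinset \ {s(u₁, u₂), s(v, v₁)}, ∀ y ∈ e, H₂.degree y ≤ H₁.degree y :=
    fun e he y hy => by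
      rw [hdeg₂, if_neg (ne_of_mem_of_not_mem hy (notMem_of_mem_edgeFinset_sdiff hpend hadj he))]
      split_ifs with hyv
      exacts [hyv ▸ Nat.sub_le _ 1, le_rfl]
  have hsum := sum_liftMul_degree_add_card_filter_mem_le sdiff_subset hle (v := v)
    (by rw [hdeg₂, if_neg hadj.ne, if_pos rfl]; omega)
  have hcard := card_filter_mem_edgeFinset_sdiff_add_one hu hadj hu₁v hu₂v
  rw [zagrebM2_eq_sum_add_sum (edgeFinset_eq_sdiff_union hu hadj) sdiff_disjoint,
    zagrebM2_eq_sum_add_sum (hH₂ ▸ edgeFinset_operationI hu₁v₁ hu₂v₁)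
      (disjoint_edgeFinset_sdiff_operationI hpend hadj),
    sum_pair (show s(u₁, u₂) ≠ s(v, v₁) by simp [hu₁v, hu₂v]),
    sum_pair (show s(u₁, v₁) ≠ s(u₂, v₁) by simp [hu.ne, hu₁v₁])]
  simp only [Sym2.liftMul_mk, hdeg₂ u₁, hdeg₂ u₂, hdeg₂ v₁, hu₁v, hu₁v₁, hu₂v, hu₂v₁, hpend,
    if_false, if_true]
  nlinarith

open scoped Classical in
/-- Operation I: if `H₁` is connected, `v` has degree at least 3, `v₁` is a pendant
vertex whose unique neighbor is `v`, and `u₁u₂` is an edge lying on a cycle of `H₁`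
with `u₁, u₂ ∉ {v, v₁}`, then the graph
`H₂ = H₁ - {u₁u₂, vv₁} + {u₁v₁, u₂v₁}` satisfies `M₂(H₂) < M₂(H₁)`. -/
theorem M2_operationI_lt {V : Type*} [Fintype V] (H₁ : SimpleGraph V)
    (hconn : H₁.Connected) (v v₁ u₁ u₂ : V)
    (hdeg : 3 ≤ H₁.degree v)
    (hpend : H₁.degree v₁ = 1) (hadj : H₁.Adj v v₁)
    (hcyc : ∃ (x : V) (c : H₁.Walk x x), c.IsCycle ∧ s(u₁, u₂) ∈ c.edges)
    (hu₁v : u₁ ≠ v) (hu₁v₁ : u₁ ≠ v₁) (hu₂v : u₂ ≠ v) (hu₂v₁ : u₂ ≠ v₁)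
    (H₂ : SimpleGraph V)
    (hH₂ : H₂ = SimpleGraph.fromEdgeSet
      ((H₁.edgeSet \ {s(u₁, u₂), s(v, v₁)}) ∪ {s(u₁, v₁), s(u₂, v₁)})) :
    zagrebM2 H₂ < zagrebM2 H₁ :=
  M2_operationI_lt_general H₁ v v₁ u₁ u₂ hdeg hpend hadj hcyc hu₁v hu₁v₁ hu₂v hu₂v₁ H₂ hH₂
end
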